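/- Let M be a Ding projective right R-module with finite flat dimension. Then M is projective. Consequently, a Ding projective module is either projective or has flat dimension ∞. -/

import Mathlib

/-! Preamble: basic notions of relative homological algebra over a
(possibly noncommutative) ring.  Right `R`-modules are modeled as
(left) modules over the opposite ring `Rᵐᵒᵖ`. -/

open CategoryTheory Opposite

noncomputable section

/-- The Ext group `Ext^n(A, B)` in the category of left `S`-modules,
computed as a derived functor (of `ℤ`-modules). -/
def extGroup (S : Type) [Ring S] (n : ℕ) (A B : ModuleCat.{0} S) : Type :=
  ((_root_.Ext ℤ (ModuleCat.{0} S) n).obj (op A)).obj B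

/-- Vanishing of the Ext group `Ext^n(A, B)`. -/
def extVanish (S : Type) [Ring S] (n : ℕ) (A B : ModuleCat.{0} S) : Prop :=
  Subsingleton (extGroup S n A B)

/-- A module `E` is FP-injective if `Ext¹(F, E) = 0` for every finitely
presented module `F`. -/
def FPInjective (S : Type) [Ring S] (E : ModuleCat.{0} S) : Prop :=
  ∀ F : ModuleCat.{0} S, Module.FinitePresentation S F → extVanish S 1 F E

/-- `E` satisfies the Ext-criterion for FP-injective dimension `≤ n`:
`Ext^{n+1}(F, E) = 0` for every finitely presented `F`. -/
def fpInjDimLE (S : Type) [Ring S] (E : ModuleCat.{0} S) (n : ℕ) : Prop :=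
  ∀ F : ModuleCat.{0} S, Module.FinitePresentation S F → extVanish S (n + 1) F E

/-- `E` has FP-injective dimension exactly `n` : `n` is the least natural number
with `Ext^{n+1}(F, E) = 0` for all finitely presented `F`. -/
def fpInjDimEq (S : Type) [Ring S] (E : ModuleCat.{0} S) (n : ℕ) : Prop :=
  fpInjDimLE S E n ∧ ∀ m : ℕ, fpInjDimLE S E m → n ≤ m

/-- `E` has finite FP-injective dimension. -/
def fpInjDimFinite (S : Type) [Ring S] (E : ModuleCat.{0} S) : Prop :=
  ∃ n : ℕ, fpInjDimLE S E n

/-- A ring `S` is left coherent if every finitely generated left ideal is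
finitely presented (as a left `S`-module). -/
def LeftCoherent (S : Type) [Ring S] : Prop :=
  ∀ I : Submodule S S, I.FG → Module.FinitePresentation S I

/-- A ring `S` is right coherent if its opposite ring is left coherent. -/
def RightCoherent (S : Type) [Ring S] : Prop :=
  LeftCoherent Sᵐᵒᵖ

section BTensor

variable (R : Type) [Ring R]

/-- The subgroup of `A ⊗_ℤ B` by which one quotients to obtain the balanced
tensor product `A ⊗_R B` of a right `R`-module `A` and a left `R`-module `B`. -/
def btRel (A : Type) [AddCommGroup A] [Module Rᵐᵒᵖ A]
    (B : Type) [AddCommGroup B] [Module R B] :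
    Submodule ℤ (TensorProduct ℤ A B) :=
  Submodule.span ℤ
    {x | ∃ (a : A) (r : R) (b : B),
      x = (MulOpposite.op r • a) ⊗ₜ[ℤ] b - a ⊗ₜ[ℤ] (r • b)}

/-- The balanced tensor product `A ⊗_R B` of a right `R`-module `A` and a left
`R`-module `B`, defined as a quotient of `A ⊗_ℤ B`. -/
abbrev BTensor (A : Type) [AddCommGroup A] [Module Rᵐᵒᵖ A]
    (B : Type) [AddCommGroup B] [Module R B] : Type :=
  TensorProduct ℤ A B ⧸ btRel R A B

variable {A A' : Type} [AddCommGroup A] [Module Rᵐᵒᵖ A] [AddCommGroup A'] [Module Rᵐᵒᵖ A']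
variable {B B' : Type} [AddCommGroup B] [Module R B] [AddCommGroup B'] [Module R B']

/-- The map `A ⊗_R B → A ⊗_R B'` induced by a map `f : B → B'` of left
`R`-modules. -/
def BTensor.lmap (f : B →ₗ[R] B') (A : Type) [AddCommGroup A] [Module Rᵐᵒᵖ A] :
    BTensor R A B →ₗ[ℤ] BTensor R A B' :=
  Submodule.mapQ (btRel R A B) (btRel R A B')
    (TensorProduct.map LinearMap.id f.toAddMonoidHom.toIntLinearMap)
    (by
      rw [btRel, Submodule.span_le]
      rintro x ⟨a, r, b, rfl⟩
      simp only [SetLike.mem_coe, Submodule.mem_comap, map_sub, TensorProduct.map_tmul,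
        LinearMap.id_apply, AddMonoidHom.coe_toIntLinearMap, LinearMap.toAddMonoidHom_coe,
        map_smul]
      exact Submodule.subset_span ⟨a, r, f b, by
        erw [map_sub, TensorProduct.map_tmul, TensorProduct.map_tmul]
        exact congrArg (fun y : B' => (MulOpposite.op r • a) ⊗ₜ[ℤ] f b - a ⊗ₜ[ℤ] y)
          (f.map_smul r b)⟩)

/-- The map `A ⊗_R B → A' ⊗_R B` induced by a map `g : A → A'` of right
`R`-modules. -/
def BTensor.rmap (g : A →ₗ[Rᵐᵒᵖ] A') (B : Type) [AddCommGroup B] [Module R B] :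
    BTensor R A B →ₗ[ℤ] BTensor R A' B :=
  Submodule.mapQ (btRel R A B) (btRel R A' B)
    (TensorProduct.map g.toAddMonoidHom.toIntLinearMap LinearMap.id)
    (by
      rw [btRel, Submodule.span_le]
      rintro x ⟨a, r, b, rfl⟩
      simp only [SetLike.mem_coe, Submodule.mem_comap, map_sub, TensorProduct.map_tmul,
        LinearMap.id_apply, AddMonoidHom.coe_toIntLinearMap, LinearMap.toAddMonoidHom_coe,
        map_smul]
      exact Submodule.subset_span ⟨g a, r, b, by
        erw [map_sub, TensorProduct.map_tmul, TensorProduct.map_tmul]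
        exact congrArg (fun y : A' => y ⊗ₜ[ℤ] b - g a ⊗ₜ[ℤ] (r • b))
          (g.map_smul (MulOpposite.op r) a)⟩)

/-- A right `R`-module `A` is flat if the functor `A ⊗_R —` preserves
injectivity of maps of left `R`-modules. -/
def FlatRight (A : ModuleCat.{0} Rᵐᵒᵖ) : Prop :=
  ∀ (B B' : ModuleCat.{0} R) (f : B →ₗ[R] B'),
    Function.Injective f → Function.Injective (BTensor.lmap R f A)

/-- A left `R`-module `B` is flat if the functor `— ⊗_R B` preserves
injectivity of maps of right `R`-modules. -/
def FlatLeft (B : ModuleCat.{0} R) : Prop :=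
  ∀ (A A' : ModuleCat.{0} Rᵐᵒᵖ) (g : A →ₗ[Rᵐᵒᵖ] A'),
    Function.Injective g → Function.Injective (BTensor.rmap R g B)

end BTensor

/-- A module `N` is Ding injective if there is a doubly infinite exact sequence
of injective modules, with `N` as one of the kernels, which stays exact after
applying `Hom(E, —)` for every FP-injective module `E`. -/
def DingInjective (S : Type) [Ring S] (N : ModuleCat.{0} S) : Prop :=
  ∃ (I : ℤ → ModuleCat.{0} S) (d : ∀ n : ℤ, I n →ₗ[S] I (n + 1)),
    (∀ n, Module.Injective S (I n)) ∧
    (∀ n, Function.Exact (d n) (d (n + 1))) ∧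
    Nonempty (N ≃ₗ[S] LinearMap.ker (d 0)) ∧
    (∀ E : ModuleCat.{0} S, FPInjective S E → ∀ n : ℤ,
      Function.Exact (fun g : E →ₗ[S] I n => (d n).comp g)
        (fun g : E →ₗ[S] I (n + 1) => (d (n + 1)).comp g))

/-- A right `R`-module `M` is Ding projective if there is a doubly infinite
exact sequence of projective right modules, with `M` as one of the kernels,
which stays exact after applying `Hom(—, F)` for every flat right module `F`. -/
def DingProjective (R : Type) [Ring R] (M : ModuleCat.{0} Rᵐᵒᵖ) : Prop :=
  ∃ (P : ℤ → ModuleCat.{0} Rᵐᵒᵖ) (d : ∀ n : ℤ, P n →ₗ[Rᵐᵒᵖ] P (n + 1)),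
    (∀ n, Module.Projective Rᵐᵒᵖ (P n)) ∧
    (∀ n, Function.Exact (d n) (d (n + 1))) ∧
    Nonempty (M ≃ₗ[Rᵐᵒᵖ] LinearMap.ker (d 0)) ∧
    (∀ F : ModuleCat.{0} Rᵐᵒᵖ, FlatRight R F → ∀ n : ℤ,
      Function.Exact (fun g : P (n + 1 + 1) →ₗ[Rᵐᵒᵖ] F => g.comp (d (n + 1)))
        (fun g : P (n + 1) →ₗ[Rᵐᵒᵖ] F => g.comp (d n)))

/-- A right `R`-module `M` is Ding flat if there is a doubly infinite exact
sequence of flat right modules, with `M` as one of the kernels, which stays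
exact after applying `— ⊗_R E` for every FP-injective left module `E`. -/
def DingFlat (R : Type) [Ring R] (M : ModuleCat.{0} Rᵐᵒᵖ) : Prop :=
  ∃ (F : ℤ → ModuleCat.{0} Rᵐᵒᵖ) (d : ∀ n : ℤ, F n →ₗ[Rᵐᵒᵖ] F (n + 1)),
    (∀ n, FlatRight R (F n)) ∧
    (∀ n, Function.Exact (d n) (d (n + 1))) ∧
    Nonempty (M ≃ₗ[Rᵐᵒᵖ] LinearMap.ker (d 0)) ∧
    (∀ E : ModuleCat.{0} R, FPInjective R E → ∀ n : ℤ,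
      Function.Exact (BTensor.rmap R (d n) E) (BTensor.rmap R (d (n + 1)) E))

/-- A left `R`-module `M` is Gorenstein flat if there is a doubly infinite
exact sequence of flat left modules, with `M` as one of the kernels, which
stays exact after applying `E ⊗_R —` for every injective right module `E`. -/
def GorensteinFlat (R : Type) [Ring R] (M : ModuleCat.{0} R) : Prop :=
  ∃ (F : ℤ → ModuleCat.{0} R) (d : ∀ n : ℤ, F n →ₗ[R] F (n + 1)),
    (∀ n, FlatLeft R (F n)) ∧
    (∀ n, Function.Exact (d n) (d (n + 1))) ∧
    Nonempty (M ≃ₗ[R] LinearMap.ker (d 0)) ∧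
    (∀ E : ModuleCat.{0} Rᵐᵒᵖ, Module.Injective Rᵐᵒᵖ E → ∀ n : ℤ,
      Function.Exact (BTensor.lmap R (d n) E) (BTensor.lmap R (d (n + 1)) E))

/-- A right `R`-module `M` has flat dimension `≤ n` : there is an exact
resolution `0 → F_n → ⋯ → F_0 → M → 0` by flat right modules (encoded as an
`ℕ`-indexed resolution which vanishes beyond degree `n`). -/
def flatDimLE (R : Type) [Ring R] (M : ModuleCat.{0} Rᵐᵒᵖ) (n : ℕ) : Prop :=
  ∃ (F : ℕ → ModuleCat.{0} Rᵐᵒᵖ) (d : ∀ k : ℕ, F (k + 1) →ₗ[Rᵐᵒᵖ] F k)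
    (ε : F 0 →ₗ[Rᵐᵒᵖ] M),
    (∀ k, FlatRight R (F k)) ∧
    Function.Surjective ε ∧
    Function.Exact (d 0) ε ∧
    (∀ k, Function.Exact (d (k + 1)) (d k)) ∧
    (∀ k, n < k → Subsingleton (F k))

/-- A right `R`-module has finite flat dimension. -/
def flatDimFinite (R : Type) [Ring R] (M : ModuleCat.{0} Rᵐᵒᵖ) : Prop :=
  ∃ n : ℕ, flatDimLE R M n

/-- A ring `R` is an `n`-FC ring if it is left and right coherent and has left
and right self FP-injective dimension equal to `n`. -/
def IsFCRing (R : Type) [Ring R] (n : ℕ) : Prop :=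
  LeftCoherent R ∧ RightCoherent R ∧
    fpInjDimEq R (ModuleCat.of R R) n ∧
    fpInjDimEq Rᵐᵒᵖ (ModuleCat.of Rᵐᵒᵖ Rᵐᵒᵖ) n

/-- A ring is Ding-Chen if it is an `n`-FC ring for some `n`. -/
def IsDingChen (R : Type) [Ring R] : Prop :=
  ∃ n : ℕ, IsFCRing R n

end


/-!
A Ding projective `M` is a kernel `ker (d 0)` in an exact complex of projectives `P` such that
`Hom(P, F)` is exact for all flat `F`. Dimension shifting along a flat resolution (lifting through
the projective terms of `P`) shows that `Hom(P, N)` is then exact for every `N` of finite flat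
dimension. Taking `N = M` itself, the corestriction `P⁻¹ → M` of the differential extends to
`P⁰ → M`, which retracts the inclusion `M ⊆ P⁰`; so `M` is a direct summand of a projective.
-/

section HomExact

variable {S : Type*} [Ring S] {P : ℤ → Type*} [∀ n, AddCommGroup (P n)] [∀ n, Module S (P n)]
  (d : ∀ n : ℤ, P n →ₗ[S] P (n + 1))

/-- The nontrivial half of the exactness of `Hom(P, F)`: every cocycle is a coboundary. -/
def HomExact (F : Type*) [AddCommGroup F] [Module S F] : Prop :=
  ∀ (n : ℤ) (g : P (n + 1) →ₗ[S] F), g.comp (d n) = 0 →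
    ∃ h : P (n + 1 + 1) →ₗ[S] F, h.comp (d (n + 1)) = g

variable {d}

theorem HomExact.of_linearEquiv {F F' : Type*} [AddCommGroup F] [Module S F] [AddCommGroup F']
    [Module S F'] (e : F ≃ₗ[S] F') (hF : HomExact d F) : HomExact d F' := by
  intro n g hg
  obtain ⟨h, hh⟩ := hF n (e.symm.toLinearMap.comp g) 
    (by rw [LinearMap.comp_assoc, hg, LinearMap.comp_zero])
  refine ⟨e.toLinearMap.comp h, ?_⟩
  rw [LinearMap.comp_assoc, hh, ← LinearMap.comp_assoc, e.comp_symm, LinearMap.id_comp]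

/-- For a complex of projectives, `HomExact` passes from `G` and `ker ε` to `F` along
`0 → ker ε → G → F → 0`. -/
theorem HomExact.of_surjective (hproj : ∀ n, Module.Projective S (P n))
    (hcomp : ∀ n, (d (n + 1)).comp (d n) = 0)
    {G F : Type*} [AddCommGroup G] [Module S G] [AddCommGroup F] [Module S F]
    {ε : G →ₗ[S] F} (hε : Function.Surjective ε)
    (hG : HomExact d G) (hK : HomExact d (LinearMap.ker ε)) : HomExact d F := by
  intro n g hg
  obtain ⟨m, rfl⟩ : ∃ m, n = m + 1 := ⟨n - 1, by omega⟩
  obtain ⟨g₀, hg₀⟩ := Module.projective_lifting_property ε g hε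
  -- `g₀` is a cocycle only up to an error `u` with values in `ker ε`, which is a coboundary.
  have hu : ∀ x, g₀ (d (m + 1) x) ∈ LinearMap.ker ε := fun x => by
    rw [LinearMap.mem_ker, ← LinearMap.comp_apply ε, hg₀, ← LinearMap.comp_apply, hg,
      LinearMap.zero_apply]
  let u := (g₀.comp (d (m + 1))).codRestrict _ hu
  have hu_cocycle : u.comp (d m) = 0 := by
    ext x
    simp [u, ← LinearMap.comp_apply (d (m + 1)), hcomp]
  obtain ⟨v, hv⟩ := hK m u hu_cocycle
  let g₁ := g₀ - (LinearMap.ker ε).subtype.comp v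
  have hg₁ : g₁.comp (d (m + 1)) = 0 := by
    rw [LinearMap.sub_comp, LinearMap.comp_assoc, hv, LinearMap.subtype_comp_codRestrict,
      sub_self]
  obtain ⟨h, hh⟩ := hG (m + 1) g₁ hg₁
  refine ⟨ε.comp h, ?_⟩
  rw [LinearMap.comp_assoc, hh, LinearMap.comp_sub, hg₀, ← LinearMap.comp_assoc,
    LinearMap.comp_ker_subtype, LinearMap.zero_comp, sub_zero]

theorem Module.Projective.ker_of_homExact {n : ℤ} [Module.Projective S (P (n + 1 + 1))]
    (hex₀ : Function.Exact (d n) (d (n + 1))) (hex₁ : Function.Exact (d (n + 1)) (d (n + 1 + 1)))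
    (hK : HomExact d (LinearMap.ker (d (n + 1 + 1)))) :
    Module.Projective S (LinearMap.ker (d (n + 1 + 1))) := by
  let K := LinearMap.ker (d (n + 1 + 1))
  let t : P (n + 1) →ₗ[S] K := (d (n + 1)).codRestrict _ fun x => hex₁.apply_apply_eq_zero x
  have ht : t.comp (d n) = 0 := by
    ext x
    exact hex₀.apply_apply_eq_zero x
  -- Since `K` is the image of `d (n + 1)`, a coboundary `r` with `r ∘ d (n + 1) = t` retracts `K`.
  obtain ⟨r, hr⟩ := hK n t ht
  refine .of_split K.subtype r (LinearMap.ext fun y => ?_)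
  obtain ⟨x, hx⟩ := (hex₁ y).mp y.2
  have := LinearMap.congr_fun hr x
  simp only [LinearMap.comp_apply] at this
  simp only [LinearMap.comp_apply, LinearMap.id_apply, Submodule.coe_subtype, ← hx, this]
  exact Subtype.ext hx

end HomExact

section FlatDim

variable {R : Type} [Ring R]

theorem flatDimLE.of_linearEquiv {M N : ModuleCat.{0} Rᵐᵒᵖ} {k : ℕ} (e : M ≃ₗ[Rᵐᵒᵖ] N)
    (hM : flatDimLE R M k) : flatDimLE R N k := by
  obtain ⟨F, δ, ε, hF, hε, hε₀, hδ, hvan⟩ := hM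
  refine ⟨F, δ, e.toLinearMap.comp ε, hF, e.surjective.comp hε, fun y => ?_, hδ, hvan⟩
  rw [LinearMap.comp_apply, LinearEquiv.coe_coe, LinearEquiv.map_eq_zero_iff]
  exact hε₀ y

theorem flatDimLE.exists_flat_linearEquiv_of_zero {M : ModuleCat.{0} Rᵐᵒᵖ}
    (hM : flatDimLE R M 0) : ∃ F : ModuleCat.{0} Rᵐᵒᵖ, FlatRight R F ∧ Nonempty (F ≃ₗ[Rᵐᵒᵖ] M) := by
  obtain ⟨F, δ, ε, hF, hε, hε₀, -, hvan⟩ := hM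
  have : Subsingleton (F 1) := hvan 1 zero_lt_one
  have hinj : Function.Injective ε := by
    rw [← LinearMap.ker_eq_bot, LinearMap.ker_eq_bot']
    intro x hx
    obtain ⟨y, rfl⟩ := (hε₀ x).mp hx
    rw [Subsingleton.elim y 0, map_zero]
  exact ⟨F 0, hF 0, ⟨.ofBijective ε ⟨hinj, hε⟩⟩⟩

theorem flatDimLE.exists_flat_surjective_of_succ {M : ModuleCat.{0} Rᵐᵒᵖ} {k : ℕ}
    (hM : flatDimLE R M (k + 1)) :
    ∃ (F : ModuleCat.{0} Rᵐᵒᵖ) (ε : F →ₗ[Rᵐᵒᵖ] M), FlatRight R F ∧ Function.Surjective ε ∧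
      flatDimLE R (ModuleCat.of Rᵐᵒᵖ (LinearMap.ker ε)) k := by
  obtain ⟨F, δ, ε, hF, hε, hε₀, hδ, hvan⟩ := hM
  refine ⟨F 0, ε, hF 0, hε, fun j => F (j + 1), fun j => δ (j + 1),
    (δ 0).codRestrict _ fun x => hε₀.apply_apply_eq_zero x, fun j => hF (j + 1), ?_,
    fun x => ?_, fun j => hδ (j + 1), fun j hj => hvan (j + 1) (by omega)⟩
  · rintro ⟨y, hy⟩
    obtain ⟨x, hx⟩ := (hε₀ y).mp hy
    exact ⟨x, Subtype.ext hx⟩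
  · rw [Subtype.ext_iff]
    exact hδ 0 x

theorem homExact_of_flatDimLE {P : ℤ → Type*} [∀ n, AddCommGroup (P n)]
    [∀ n, Module Rᵐᵒᵖ (P n)] {d : ∀ n : ℤ, P n →ₗ[Rᵐᵒᵖ] P (n + 1)}
    (hproj : ∀ n, Module.Projective Rᵐᵒᵖ (P n)) (hcomp : ∀ n, (d (n + 1)).comp (d n) = 0)
    (hflat : ∀ F : ModuleCat.{0} Rᵐᵒᵖ, FlatRight R F → HomExact d F) :
    ∀ (k : ℕ) (M : ModuleCat.{0} Rᵐᵒᵖ), flatDimLE R M k → HomExact d M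
  | 0, _, hM => by
    obtain ⟨F, hF, ⟨e⟩⟩ := hM.exists_flat_linearEquiv_of_zero
    exact (hflat F hF).of_linearEquiv e
  | k + 1, _, hM => by
    obtain ⟨F, ε, hF, hε, hK⟩ := hM.exists_flat_surjective_of_succ
    exact .of_surjective hproj hcomp hε (hflat F hF)
      (homExact_of_flatDimLE hproj hcomp hflat k _ hK)

end FlatDim

/-- A Ding projective right `R`-module of finite flat dimension is
projective. -/
theorem statement6 (R : Type) [Ring R] (M : ModuleCat.{0} Rᵐᵒᵖ)
    (hM : DingProjective R M) (hfin : flatDimFinite R M) :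
    Module.Projective Rᵐᵒᵖ M := by
  obtain ⟨P, d, hproj, hex, ⟨e⟩, hflat⟩ := hM
  obtain ⟨k, hk⟩ := hfin
  -- `-2 + 1 + 1` is `0`, written in the shape `ker_of_homExact` expects.
  have hK : HomExact d (LinearMap.ker (d (-2 + 1 + 1))) :=
    homExact_of_flatDimLE hproj (fun n => (hex n).linearMap_comp_eq_zero)
      (fun F hF n g hg => (hflat F hF n g).mp hg) k (ModuleCat.of _ _) (hk.of_linearEquiv e)
  have : Module.Projective Rᵐᵒᵖ (LinearMap.ker (d 0)) :=
    Module.Projective.ker_of_homExact (hex _) (hex _) hK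
  exact .of_equiv e.symm
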